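/- arXiv:1206.5704 — 2 statements merged into one kernel-verified Lean document; each statement's English description precedes it below -/
import Mathlib

section
/- Fix T > 0. Let k, H₁, H₂, H₃, H₄, H₅ : ℝ → ℝ be Lipschitz continuous functions, and assume in addition that H₄ and H₅ are bounded. Then the integral equation x_t = H₁(S(0,t)) + ∫₀ᵗ H₂(S(s,t)) ds + ∫₀ᵗ H₃(x_s)·H₅(x_s)·H₄(S(s,t)) ds, where S(s,t) = ∫ₛᵗ k(x_u) du, for t ∈ [0,T] (so that in particular x₀ = H₁(0)), has a unique solution in the space C([0,T], ℝ) of continuous real-valued functions on [0,T]. -/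
/-!
Write `Φ` for the right-hand side of the equation, so that solutions are the fixed points of `Φ`
on `[0, T]`. Since `Φ x t` only involves `x` on `[0, t]`, `Φ` is Lipschitz in Volterra form:
`|Φ f t - Φ g t| ≤ C ∫₀ᵗ |f - g|`, where `C` depends on a bound `R` for `g` because `H₃` is
unbounded. Iterating this estimate produces the factor `(C t)ⁿ / n!`. For two solutions this
forces their difference to vanish. For existence, the case `g = 0` gives linear growth
`|Φ f t| ≤ A + B ∫₀ᵗ |f|`, so `Φ` preserves the continuous functions dominated by `A e^{B t}`;
on this complete set `C` is uniform and some iterate of `Φ` is a contraction.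
-/

open MeasureTheory Set

/-- The integral equation
`x_t = H₁(S(0,t)) + ∫₀ᵗ H₂(S(s,t)) ds + ∫₀ᵗ H₃(x_s)·H₅(x_s)·H₄(S(s,t)) ds`
with `S(s,t) = ∫ₛᵗ k(x_u) du`. -/
def IntegralEq2 (k H1 H2 H3 H4 H5 : ℝ → ℝ) (T : ℝ) (x : ℝ → ℝ) : Prop :=
  ∀ t ∈ Set.Icc (0 : ℝ) T,
    x t = H1 (∫ u in (0 : ℝ)..t, k (x u))
      + ∫ s in (0 : ℝ)..t, H2 (∫ u in s..t, k (x u))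
      + ∫ s in (0 : ℝ)..t, H3 (x s) * H5 (x s) * H4 (∫ u in s..t, k (x u))

open Filter Topology
open scoped Nat NNReal

/-- Only `g` needs to be bounded: with `g = 0` this gives the linear growth of `Φ`. -/
def VolterraLipschitzOn (Φ : (ℝ → ℝ) → ℝ → ℝ) (T R C : ℝ) : Prop :=
  ∀ f g : ℝ → ℝ, Continuous f → Continuous g → (∀ s ∈ Icc 0 T, |g s| ≤ R) →
    ∀ t ∈ Icc 0 T, |Φ f t - Φ g t| ≤ C * ∫ s in (0 : ℝ)..t, |f s - g s|

theorem le_mul_pow_div_factorial_of_le_integral {T C D : ℝ} (hC : 0 ≤ C) {d : ℕ → ℝ → ℝ}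
    (hd : ∀ n, Continuous (d n)) (h0 : ∀ t ∈ Icc 0 T, d 0 t ≤ D)
    (hsucc : ∀ n, ∀ t ∈ Icc 0 T, d (n + 1) t ≤ C * ∫ s in (0 : ℝ)..t, d n s) (n : ℕ) :
    ∀ t ∈ Icc 0 T, d n t ≤ D * (C * t) ^ n / n ! := by
  induction n with
  | zero => simpa using h0
  | succ n ih =>
    intro t ht
    have hmono : ∫ s in (0 : ℝ)..t, d n s ≤ ∫ s in (0 : ℝ)..t, D * C ^ n / n ! * s ^ n :=
      intervalIntegral.integral_mono_on ht.1 ((hd n).intervalIntegrable _ _)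
        ((by fun_prop : Continuous fun s : ℝ => D * C ^ n / n ! * s ^ n).intervalIntegrable _ _)
        fun s hs => (ih s ⟨hs.1, hs.2.trans ht.2⟩).trans_eq (by ring)
    calc d (n + 1) t ≤ C * ∫ s in (0 : ℝ)..t, d n s := hsucc n t ht
      _ ≤ C * ∫ s in (0 : ℝ)..t, D * C ^ n / n ! * s ^ n := by gcongr
      _ = D * (C * t) ^ (n + 1) / (n + 1)! := by
        rw [intervalIntegral.integral_const_mul, integral_pow, Nat.factorial_succ]
        push_cast
        field_simp
        ring

theorem nonpos_of_le_mul_integral {T C : ℝ} (hC : 0 ≤ C) {d : ℝ → ℝ} (hd : Continuous d)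
    (h : ∀ t ∈ Icc 0 T, d t ≤ C * ∫ s in (0 : ℝ)..t, d s) : ∀ t ∈ Icc 0 T, d t ≤ 0 := by
  obtain ⟨D, hD⟩ := (isCompact_Icc.image hd).bddAbove
  intro t ht
  have hlim : Tendsto (fun n => D * ((C * t) ^ n / n !)) atTop (𝓝 0) := by
    simpa using (FloorSemiring.tendsto_pow_div_factorial_atTop (C * t)).const_mul D
  refine ge_of_tendsto' hlim fun n => ?_
  rw [← mul_div_assoc]
  exact le_mul_pow_div_factorial_of_le_integral hC (d := fun _ => d) (fun _ => hd)
    (fun s hs => hD (mem_image_of_mem d hs)) (fun _ => h) n t ht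

theorem VolterraLipschitzOn.eqOn {Φ : (ℝ → ℝ) → ℝ → ℝ} {T R C : ℝ}
    (hΦ : VolterraLipschitzOn Φ T R C) (hC : 0 ≤ C) {x y : ℝ → ℝ} (hx : Continuous x)
    (hy : Continuous y) (hyR : ∀ s ∈ Icc 0 T, |y s| ≤ R) (hxΦ : EqOn x (Φ x) (Icc 0 T))
    (hyΦ : EqOn y (Φ y) (Icc 0 T)) : EqOn x y (Icc 0 T) := by
  have hd := nonpos_of_le_mul_integral hC (hx.sub hy).abs fun t ht => by
    simp only [Pi.sub_apply]
    rw [hxΦ ht, hyΦ ht]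
    exact hΦ x y hx hy hyR t ht
  intro t ht
  exact sub_eq_zero.1 (abs_nonpos_iff.1 (hd t ht))

theorem ContinuousOn.exists_continuous_eqOn_Icc {α β : Type*} [LinearOrder α]
    [TopologicalSpace α] [OrderTopology α] [TopologicalSpace β] {a b : α} (hab : a ≤ b)
    {f : α → β} (hf : ContinuousOn f (Icc a b)) : ∃ g, Continuous g ∧ EqOn g f (Icc a b) :=
  ⟨IccExtend hab ((Icc a b).domRestrict f),
    (continuousOn_iff_continuous_domRestrict.1 hf).Icc_extend', fun _ ht => IccExtend_of_mem hab _ ht⟩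

theorem eqOn_of_volterraLipschitzOn {Φ : (ℝ → ℝ) → ℝ → ℝ} {T : ℝ} (hT : 0 ≤ T)
    (hlocal : ∀ f g, EqOn f g (Icc 0 T) → EqOn (Φ f) (Φ g) (Icc 0 T))
    (hΦ : ∀ R, ∃ C, 0 ≤ C ∧ VolterraLipschitzOn Φ T R C) {x y : ℝ → ℝ}
    (hx : ContinuousOn x (Icc 0 T)) (hy : ContinuousOn y (Icc 0 T))
    (hxΦ : EqOn x (Φ x) (Icc 0 T)) (hyΦ : EqOn y (Φ y) (Icc 0 T)) : EqOn x y (Icc 0 T) := by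
  obtain ⟨x', hx'c, hx'⟩ := hx.exists_continuous_eqOn_Icc hT
  obtain ⟨y', hy'c, hy'⟩ := hy.exists_continuous_eqOn_Icc hT
  obtain ⟨R, hR⟩ := isCompact_Icc.exists_bound_of_continuousOn hy
  obtain ⟨C, hC, hΦC⟩ := hΦ R
  have hfix {z z' : ℝ → ℝ} (hz : EqOn z' z (Icc 0 T)) (hzΦ : EqOn z (Φ z) (Icc 0 T)) :
      EqOn z' (Φ z') (Icc 0 T) := fun t ht =>
    (hz ht).trans ((hzΦ ht).trans (hlocal _ _ hz.symm ht))
  have hy'R : ∀ s ∈ Icc 0 T, |y' s| ≤ R := fun s hs => by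
    rw [hy' hs, ← Real.norm_eq_abs]
    exact hR s hs
  have := hΦC.eqOn hC hx'c hy'c hy'R (hfix hx' hxΦ) (hfix hy' hyΦ)
  exact fun t ht => (hx' ht).symm.trans ((this ht).trans (hy' ht))

theorem dist_iterate_le_of_abs_sub_le_integral {T C : ℝ} (hT : 0 ≤ T) (hC : 0 ≤ C)
    {Y : Set C(Icc (0 : ℝ) T, ℝ)} (P : Y → Y)
    (hP : ∀ f g : Y, ∀ t ∈ Icc 0 T, |IccExtend hT (P f).1 t - IccExtend hT (P g).1 t|
      ≤ C * ∫ s in (0 : ℝ)..t, |IccExtend hT f.1 s - IccExtend hT g.1 s|)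
    (n : ℕ) (f g : Y) : dist (P^[n] f) (P^[n] g) ≤ (C * T) ^ n / n ! * dist f g := by
  have hd0 : ∀ t ∈ Icc 0 T, |IccExtend hT f.1 t - IccExtend hT g.1 t| ≤ dist f g :=
    fun t ht => by
      rw [IccExtend_of_mem hT _ ht, IccExtend_of_mem hT _ ht, ← Real.dist_eq, Subtype.dist_eq]
      exact ContinuousMap.dist_apply_le_dist _
  have hiter := le_mul_pow_div_factorial_of_le_integral hC
    (d := fun n t => |IccExtend hT (P^[n] f).1 t - IccExtend hT (P^[n] g).1 t|)
    (fun n => by fun_prop) hd0 (fun n t ht => by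
      simp only [Function.iterate_succ_apply']
      exact hP _ _ t ht) n
  rw [Subtype.dist_eq, ContinuousMap.dist_le (by positivity)]
  intro t
  have := hiter t t.2
  rw [IccExtend_of_mem hT _ t.2, IccExtend_of_mem hT _ t.2] at this
  rw [Real.dist_eq]
  refine this.trans ?_
  rw [mul_comm, mul_div_right_comm]
  gcongr
  exacts [mul_nonneg hC t.2.1, t.2.2]

theorem exists_isFixedPt_of_abs_sub_le_integral {T C : ℝ} (hT : 0 ≤ T) (hC : 0 ≤ C)
    {Y : Set C(Icc (0 : ℝ) T, ℝ)} [CompleteSpace Y] [Nonempty Y] (P : Y → Y)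
    (hP : ∀ f g : Y, ∀ t ∈ Icc 0 T, |IccExtend hT (P f).1 t - IccExtend hT (P g).1 t|
      ≤ C * ∫ s in (0 : ℝ)..t, |IccExtend hT f.1 s - IccExtend hT g.1 s|) :
    ∃ x, Function.IsFixedPt P x := by
  obtain ⟨n, hn⟩ := (FloorSemiring.tendsto_pow_div_factorial_atTop (C * T)).eventually
    (gt_mem_nhds zero_lt_one) |>.exists
  have hK : 0 ≤ (C * T) ^ n / n ! := by positivity
  have hcontr : ContractingWith ⟨_, hK⟩ P^[n] :=
    ⟨hn, LipschitzWith.of_dist_le_mul (dist_iterate_le_of_abs_sub_le_integral hT hC P hP n)⟩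
  exact ⟨_, hcontr.isFixedPt_fixedPoint_iterate⟩

theorem VolterraLipschitzOn.exists_continuous_eqOn_of_invariant {Φ : (ℝ → ℝ) → ℝ → ℝ}
    {T R C : ℝ} (hΦ : VolterraLipschitzOn Φ T R C) (hT : 0 ≤ T) (hC : 0 ≤ C) {r : ℝ → ℝ}
    (hr : ∀ t ∈ Icc 0 T, 0 ≤ r t) (hrR : ∀ t ∈ Icc 0 T, r t ≤ R)
    (hcont : ∀ f, Continuous f → Continuous (Φ f))
    (hmaps : ∀ f, Continuous f → (∀ t ∈ Icc 0 T, |f t| ≤ r t) → ∀ t ∈ Icc 0 T, |Φ f t| ≤ r t) :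
    ∃ x, Continuous x ∧ EqOn x (Φ x) (Icc 0 T) := by
  let Y : Set C(Icc (0 : ℝ) T, ℝ) := ⋂ t, {h | |h t| ≤ r t}
  have : CompleteSpace Y := (isClosed_iInter fun t =>
    isClosed_le (continuous_eval_const t).abs continuous_const).completeSpace_coe
  have : Nonempty Y := ⟨⟨0, mem_iInter.2 fun t => by simpa using hr t t.2⟩⟩
  have hext (h : Y) : ∀ t ∈ Icc 0 T, |IccExtend hT h.1 t| ≤ r t := fun t ht => by
    rw [IccExtend_of_mem hT _ ht]
    exact mem_iInter.1 h.2 ⟨t, ht⟩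
  let P (h : Y) : Y := ⟨⟨(Icc 0 T).domRestrict (Φ (IccExtend hT h.1)),
      (hcont _ h.1.continuous.Icc_extend').continuousOn.domRestrict⟩,
    mem_iInter.2 fun t => hmaps _ h.1.continuous.Icc_extend' (hext h) t t.2⟩
  have hP (h : Y) : EqOn (IccExtend hT (P h).1) (Φ (IccExtend hT h.1)) (Icc 0 T) :=
    fun t ht => IccExtend_of_mem hT _ ht
  obtain ⟨x, hx⟩ := exists_isFixedPt_of_abs_sub_le_integral hT hC P fun f g t ht => by
    rw [hP f ht, hP g ht]
    exact hΦ _ _ f.1.continuous.Icc_extend' g.1.continuous.Icc_extend'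
      (fun s hs => (hext g s hs).trans (hrR s hs)) t ht
  refine ⟨IccExtend hT x.1, x.1.continuous.Icc_extend', fun t ht => ?_⟩
  conv_lhs => rw [← hx]
  exact hP x ht

theorem add_mul_integral_mul_exp {A B : ℝ} (hB : B ≠ 0) (t : ℝ) :
    A + B * ∫ s in (0 : ℝ)..t, A * Real.exp (B * s) = A * Real.exp (B * t) := by
  rw [intervalIntegral.integral_const_mul, intervalIntegral.integral_comp_mul_left _ hB,
    integral_exp, smul_eq_mul, mul_zero, Real.exp_zero]
  field_simp
  ring

theorem exists_continuous_eqOn_of_volterraLipschitzOn {Φ : (ℝ → ℝ) → ℝ → ℝ} {T : ℝ}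
    (hT : 0 ≤ T) (hcont : ∀ f, Continuous f → Continuous (Φ f))
    (hΦ : ∀ R, ∃ C, 0 ≤ C ∧ VolterraLipschitzOn Φ T R C) :
    ∃ x, Continuous x ∧ EqOn x (Φ x) (Icc 0 T) := by
  obtain ⟨C₀, hC₀, hΦ₀⟩ := hΦ 0
  obtain ⟨A, hA⟩ := isCompact_Icc.exists_bound_of_continuousOn
    (hcont 0 continuous_const).continuousOn
  have hA₀ : 0 ≤ A := (norm_nonneg _).trans (hA 0 ⟨le_rfl, hT⟩)
  have hgrowth (f : ℝ → ℝ) (hf : Continuous f) (t : ℝ) (ht : t ∈ Icc 0 T) :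
      |Φ f t| ≤ A + (C₀ + 1) * ∫ s in (0 : ℝ)..t, |f s| := by
    have hI : 0 ≤ ∫ s in (0 : ℝ)..t, |f s| :=
      intervalIntegral.integral_nonneg ht.1 fun _ _ => abs_nonneg _
    have h₀ := hΦ₀ f 0 hf continuous_const (by simp) t ht
    simp only [Pi.zero_apply, sub_zero] at h₀
    have hΦ0t : |Φ 0 t| ≤ A := hA t ht
    have hC₀I : C₀ * ∫ s in (0 : ℝ)..t, |f s| ≤ (C₀ + 1) * ∫ s in (0 : ℝ)..t, |f s| := by
      gcongr
      linarith
    linarith [abs_sub_abs_le_abs_sub (Φ f t) (Φ 0 t)]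
  obtain ⟨C, hC, hΦC⟩ := hΦ (A * Real.exp ((C₀ + 1) * T))
  -- `r t = A * exp ((C₀ + 1) t)` solves `r t = A + (C₀ + 1) ∫₀ᵗ r`, hence is preserved by `Φ`.
  refine hΦC.exists_continuous_eqOn_of_invariant hT hC
    (r := fun t => A * Real.exp ((C₀ + 1) * t)) (fun t _ => by positivity)
    (fun t ht => by gcongr; exact ht.2) hcont ?_
  intro f hf hfr t ht
  calc |Φ f t| ≤ A + (C₀ + 1) * ∫ s in (0 : ℝ)..t, |f s| := hgrowth f hf t ht
    _ ≤ A + (C₀ + 1) * ∫ s in (0 : ℝ)..t, A * Real.exp ((C₀ + 1) * s) := by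
      gcongr
      exact intervalIntegral.integral_mono_on ht.1 (hf.abs.intervalIntegrable _ _)
        ((by fun_prop : Continuous fun s => A * Real.exp ((C₀ + 1) * s)).intervalIntegrable _ _)
        fun s hs => hfr s ⟨hs.1, hs.2.trans ht.2⟩
    _ = A * Real.exp ((C₀ + 1) * t) := add_mul_integral_mul_exp (by linarith) t

theorem LipschitzWith.abs_sub_le {K : ℝ≥0} {F : ℝ → ℝ} (hF : LipschitzWith K F) (a b : ℝ) :
    |F a - F b| ≤ K * |a - b| := by
  simpa only [Real.dist_eq] using hF.dist_le_mul a b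

theorem abs_mul_sub_mul_le (a b c d : ℝ) : |a * b - c * d| ≤ |a - c| * |b| + |c| * |b - d| := by
  calc |a * b - c * d| = |(a - c) * b + c * (b - d)| := by ring_nf
    _ ≤ |a - c| * |b| + |c| * |b - d| := by
      rw [← abs_mul, ← abs_mul]
      exact abs_add_le _ _

theorem abs_integral_le_mul_integral_add_mul {F w : ℝ → ℝ} {a b t : ℝ} (ht : 0 ≤ t)
    (hw : Continuous w) (h : ∀ s ∈ Icc 0 t, |F s| ≤ a * |w s| + b) :
    |∫ s in (0 : ℝ)..t, F s| ≤ (a * ∫ s in (0 : ℝ)..t, |w s|) + b * t := by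
  have hint : ∫ s in (0 : ℝ)..t, (a * |w s| + b) = (a * ∫ s in (0 : ℝ)..t, |w s|) + b * t := by
    rw [intervalIntegral.integral_add ((hw.abs.intervalIntegrable _ _).const_mul a)
      intervalIntegrable_const, intervalIntegral.integral_const_mul,
      intervalIntegral.integral_const, smul_eq_mul, sub_zero, mul_comm t]
  rw [← hint, ← Real.norm_eq_abs]
  refine intervalIntegral.norm_integral_le_of_norm_le ht (Eventually.of_forall fun s hs => ?_)
    ((by fun_prop : Continuous fun s => a * |w s| + b).intervalIntegrable _ _)
  exact h s (Ioc_subset_Icc_self hs)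

noncomputable def integralComp (k x : ℝ → ℝ) (s t : ℝ) : ℝ := ∫ u in s..t, k (x u)

/-- The right-hand side of `IntegralEq2` with the parenthesization Lean gives it: the binder of
the second integral extends to the end of the line, so the third integral lies inside it and
contributes `t * ∫₀ᵗ H₃ H₅ H₄` (see `picardMap_eq`). -/
noncomputable def picardMap (k H1 H2 H3 H4 H5 : ℝ → ℝ) (x : ℝ → ℝ) (t : ℝ) : ℝ :=
  H1 (integralComp k x 0 t)
    + ∫ s in (0 : ℝ)..t, (H2 (integralComp k x s t)
      + ∫ s in (0 : ℝ)..t, H3 (x s) * H5 (x s) * H4 (integralComp k x s t))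

section picardMap

variable {k H1 H2 H3 H4 H5 x : ℝ → ℝ}

theorem integralComp_eq_sub (hk : Continuous k) (hx : Continuous x) (s t : ℝ) :
    integralComp k x s t = integralComp k x 0 t - integralComp k x 0 s :=
  (intervalIntegral.integral_interval_sub_left ((hk.comp hx).intervalIntegrable _ _)
    ((hk.comp hx).intervalIntegrable _ _)).symm

theorem continuous_integralComp (hk : Continuous k) (hx : Continuous x) :
    Continuous fun p : ℝ × ℝ => integralComp k x p.1 p.2 := by
  have hprim : Continuous (integralComp k x 0) :=
    intervalIntegral.continuous_primitive (fun _ _ => (hk.comp hx).intervalIntegrable _ _) 0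
  rw [show (fun p : ℝ × ℝ => integralComp k x p.1 p.2)
      = fun p => integralComp k x 0 p.2 - integralComp k x 0 p.1 from
    funext fun p => integralComp_eq_sub hk hx p.1 p.2]
  fun_prop

theorem continuous_integralComp_left (hk : Continuous k) (hx : Continuous x) (t : ℝ) :
    Continuous fun s => integralComp k x s t :=
  (continuous_integralComp hk hx).comp (continuous_id.prodMk continuous_const)

theorem continuous_picardMap (hk : Continuous k) (h1 : Continuous H1) (h2 : Continuous H2)
    (h3 : Continuous H3) (h4 : Continuous H4) (h5 : Continuous H5) (hx : Continuous x) :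
    Continuous (picardMap k H1 H2 H3 H4 H5 x) := by
  have hS : Continuous fun p : ℝ × ℝ => integralComp k x p.2 p.1 :=
    (continuous_integralComp hk hx).comp continuous_swap
  have hG : Continuous fun t => ∫ s in (0 : ℝ)..t,
      H3 (x s) * H5 (x s) * H4 (integralComp k x s t) :=
    intervalIntegral.continuous_parametric_intervalIntegral_of_continuous
      (((h3.comp (hx.comp continuous_snd)).mul (h5.comp (hx.comp continuous_snd))).mul
        (h4.comp hS)) continuous_id
  refine (h1.comp (hS.comp (continuous_id.prodMk continuous_const))).add ?_
  exact intervalIntegral.continuous_parametric_intervalIntegral_of_continuous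
    ((h2.comp hS).add (hG.comp continuous_fst)) continuous_id

theorem picardMap_eq (hk : Continuous k) (h2 : Continuous H2) (hx : Continuous x) (t : ℝ) :
    picardMap k H1 H2 H3 H4 H5 x t = H1 (integralComp k x 0 t)
      + (∫ s in (0 : ℝ)..t, H2 (integralComp k x s t))
      + t * ∫ s in (0 : ℝ)..t, H3 (x s) * H5 (x s) * H4 (integralComp k x s t) := by
  have hS : IntervalIntegrable (fun s => H2 (integralComp k x s t)) volume 0 t :=
    (h2.comp (continuous_integralComp_left hk hx t)).intervalIntegrable _ _
  rw [picardMap, intervalIntegral.integral_add hS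
    intervalIntegrable_const, intervalIntegral.integral_const, smul_eq_mul, sub_zero, add_assoc]

theorem picardMap_congr {T : ℝ} {f g : ℝ → ℝ} (hfg : EqOn f g (Icc 0 T)) :
    EqOn (picardMap k H1 H2 H3 H4 H5 f) (picardMap k H1 H2 H3 H4 H5 g) (Icc 0 T) := by
  intro t ht
  have hsub : uIcc 0 t ⊆ Icc 0 T := by
    rw [uIcc_of_le ht.1]
    exact Icc_subset_Icc_right ht.2
  have hS : ∀ s ∈ uIcc 0 t, integralComp k f s t = integralComp k g s t := fun s hs =>
    intervalIntegral.integral_congr fun u hu =>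
      congrArg k (hfg (hsub (uIcc_subset_uIcc hs right_mem_uIcc hu)))
  unfold picardMap
  rw [hS 0 left_mem_uIcc]
  congr 1
  refine intervalIntegral.integral_congr fun s hs => ?_
  rw [hS s hs]
  congr 1
  refine intervalIntegral.integral_congr fun s hs => ?_
  rw [hS s hs, hfg (hsub hs)]

theorem abs_integralComp_sub_le {K : ℝ≥0} (hk : LipschitzWith K k) {f g : ℝ → ℝ}
    (hf : Continuous f) (hg : Continuous g) {s t : ℝ} (hs : 0 ≤ s) (hst : s ≤ t) :
    |integralComp k f s t - integralComp k g s t| ≤ K * ∫ u in (0 : ℝ)..t, |f u - g u| := by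
  have hkf : IntervalIntegrable (fun u => k (f u)) volume s t :=
    (hk.continuous.comp hf).intervalIntegrable _ _
  have hkg : IntervalIntegrable (fun u => k (g u)) volume s t :=
    (hk.continuous.comp hg).intervalIntegrable _ _
  rw [integralComp, integralComp, ← intervalIntegral.integral_sub hkf hkg,
    ← intervalIntegral.integral_const_mul, ← Real.norm_eq_abs]
  calc ‖∫ u in s..t, (k (f u) - k (g u))‖ ≤ ∫ u in s..t, K * |f u - g u| :=
        intervalIntegral.norm_integral_le_of_norm_le hst
          (Eventually.of_forall fun u _ => hk.abs_sub_le _ _)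
          ((by fun_prop : Continuous fun u => K * |f u - g u|).intervalIntegrable _ _)
    _ ≤ ∫ u in (0 : ℝ)..t, K * |f u - g u| :=
        intervalIntegral.integral_mono_interval hs hst le_rfl
          (Eventually.of_forall fun u => by positivity)
          ((by fun_prop : Continuous fun u => K * |f u - g u|).intervalIntegrable _ _)

theorem abs_mul_mul_sub_mul_mul_le {L3 L4 L5 : ℝ≥0} {M4 M5 : ℝ} (h3 : LipschitzWith L3 H3)
    (h4 : LipschitzWith L4 H4) (h5 : LipschitzWith L5 H5) (hM4 : ∀ y, |H4 y| ≤ M4)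
    (hM5 : ∀ y, |H5 y| ≤ M5) (a b p q : ℝ) :
    |H3 a * H5 a * H4 p - H3 b * H5 b * H4 q|
      ≤ (L3 * M5 + |H3 b| * L5) * M4 * |a - b| + |H3 b| * M5 * L4 * |p - q| := by
  lift M4 to ℝ≥0 using (abs_nonneg _).trans (hM4 0)
  lift M5 to ℝ≥0 using (abs_nonneg _).trans (hM5 0)
  calc |H3 a * H5 a * H4 p - H3 b * H5 b * H4 q|
      ≤ |H3 a * H5 a - H3 b * H5 b| * |H4 p| + |H3 b * H5 b| * |H4 p - H4 q| :=
        abs_mul_sub_mul_le _ _ _ _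
    _ ≤ (|H3 a - H3 b| * |H5 a| + |H3 b| * |H5 a - H5 b|) * M4
        + |H3 b| * M5 * (L4 * |p - q|) := by
        rw [abs_mul]
        gcongr
        exacts [abs_mul_sub_mul_le _ _ _ _, hM4 p, hM5 b, h4.abs_sub_le p q]
    _ ≤ (L3 * |a - b| * M5 + |H3 b| * (L5 * |a - b|)) * M4
        + |H3 b| * M5 * (L4 * |p - q|) := by
        gcongr
        exacts [h3.abs_sub_le a b, hM5 a, h5.abs_sub_le a b]
    _ = (L3 * M5 + |H3 b| * L5) * M4 * |a - b| + |H3 b| * M5 * L4 * |p - q| := by ring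

theorem picardMap_volterraLipschitzOn {K L1 L2 L3 L4 L5 : ℝ≥0} {M4 M5 T : ℝ} (hT : 0 ≤ T)
    (hk : LipschitzWith K k) (h1 : LipschitzWith L1 H1) (h2 : LipschitzWith L2 H2)
    (h3 : LipschitzWith L3 H3) (h4 : LipschitzWith L4 H4) (h5 : LipschitzWith L5 H5)
    (hM4 : ∀ y, |H4 y| ≤ M4) (hM5 : ∀ y, |H5 y| ≤ M5) (R : ℝ) :
    ∃ C, 0 ≤ C ∧ VolterraLipschitzOn (picardMap k H1 H2 H3 H4 H5) T R C := by
  lift M4 to ℝ≥0 using (abs_nonneg _).trans (hM4 0)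
  lift M5 to ℝ≥0 using (abs_nonneg _).trans (hM5 0)
  set R₃ := |H3 0| + L3 * |R|
  set a := (L3 * M5 + R₃ * L5) * M4
  refine ⟨L1 * K + L2 * K * T + T * (a + R₃ * M5 * L4 * K * T), by positivity, ?_⟩
  intro f g hf hg hgR t ht
  obtain ⟨ht₀, htT⟩ := ht
  set I := ∫ s in (0 : ℝ)..t, |f s - g s|
  have hI : 0 ≤ I := intervalIntegral.integral_nonneg ht₀ fun _ _ => abs_nonneg _
  have hS : ∀ s ∈ Icc 0 t, |integralComp k f s t - integralComp k g s t| ≤ K * I :=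
    fun s hs => abs_integralComp_sub_le hk hf hg hs.1 hs.2
  have hH3 : ∀ s ∈ Icc 0 t, |H3 (g s)| ≤ R₃ := fun s hs => by
    have hLip := h3.abs_sub_le (g s) 0
    have hgs := (hgR s ⟨hs.1, hs.2.trans htT⟩).trans (le_abs_self R)
    rw [sub_zero] at hLip
    have : (L3 : ℝ) * |g s| ≤ L3 * |R| := by gcongr
    linarith [abs_sub_abs_le_abs_sub (H3 (g s)) (H3 0)]
  have hSf := continuous_integralComp_left hk.continuous hf t
  have hSg := continuous_integralComp_left hk.continuous hg t
  have e₁ : |H1 (integralComp k f 0 t) - H1 (integralComp k g 0 t)| ≤ L1 * (K * I) :=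
    (h1.abs_sub_le _ _).trans (by gcongr; exact hS 0 ⟨le_rfl, ht₀⟩)
  have e₂ : |(∫ s in (0 : ℝ)..t, H2 (integralComp k f s t))
      - ∫ s in (0 : ℝ)..t, H2 (integralComp k g s t)| ≤ L2 * (K * I) * t := by
    have hf₂ : IntervalIntegrable (fun s => H2 (integralComp k f s t)) volume 0 t :=
      (h2.continuous.comp hSf).intervalIntegrable _ _
    have hg₂ : IntervalIntegrable (fun s => H2 (integralComp k g s t)) volume 0 t :=
      (h2.continuous.comp hSg).intervalIntegrable _ _
    rw [← intervalIntegral.integral_sub hf₂ hg₂, ← Real.norm_eq_abs]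
    refine (intervalIntegral.norm_integral_le_of_norm_le_const fun s hs => ?_).trans_eq
      (by rw [sub_zero, abs_of_nonneg ht₀])
    rw [uIoc_of_le ht₀] at hs
    exact (h2.abs_sub_le _ _).trans (by gcongr; exact hS s (Ioc_subset_Icc_self hs))
  have e₃ : |(∫ s in (0 : ℝ)..t, H3 (f s) * H5 (f s) * H4 (integralComp k f s t))
      - ∫ s in (0 : ℝ)..t, H3 (g s) * H5 (g s) * H4 (integralComp k g s t)|
      ≤ a * I + R₃ * M5 * L4 * (K * I) * t := by
    have hf₃ : IntervalIntegrable
        (fun s => H3 (f s) * H5 (f s) * H4 (integralComp k f s t)) volume 0 t :=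
      (((h3.continuous.comp hf).mul (h5.continuous.comp hf)).mul
        (h4.continuous.comp hSf)).intervalIntegrable _ _
    have hg₃ : IntervalIntegrable
        (fun s => H3 (g s) * H5 (g s) * H4 (integralComp k g s t)) volume 0 t :=
      (((h3.continuous.comp hg).mul (h5.continuous.comp hg)).mul
        (h4.continuous.comp hSg)).intervalIntegrable _ _
    rw [← intervalIntegral.integral_sub hf₃ hg₃]
    refine abs_integral_le_mul_integral_add_mul ht₀ (hf.sub hg) fun s hs => ?_
    refine (abs_mul_mul_sub_mul_mul_le h3 h4 h5 hM4 hM5 _ _ _ _).trans ?_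
    have := hH3 s hs
    have := hS s hs
    simp only [a]
    gcongr
  rw [picardMap_eq hk.continuous h2.continuous hf, picardMap_eq hk.continuous h2.continuous hg]
  calc _ = |(H1 (integralComp k f 0 t) - H1 (integralComp k g 0 t))
        + ((∫ s in (0 : ℝ)..t, H2 (integralComp k f s t))
          - ∫ s in (0 : ℝ)..t, H2 (integralComp k g s t))
        + t * ((∫ s in (0 : ℝ)..t, H3 (f s) * H5 (f s) * H4 (integralComp k f s t))
          - ∫ s in (0 : ℝ)..t, H3 (g s) * H5 (g s) * H4 (integralComp k g s t))| := by
        ring_nf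
    _ ≤ L1 * (K * I) + L2 * (K * I) * t + t * (a * I + R₃ * M5 * L4 * (K * I) * t) := by
        refine (abs_add_three _ _ _).trans ?_
        rw [abs_mul, abs_of_nonneg ht₀]
        gcongr
    _ ≤ L1 * (K * I) + L2 * (K * I) * T + T * (a * I + R₃ * M5 * L4 * (K * I) * T) := by
        gcongr
    _ = _ := by ring

end picardMap

theorem stmt2 (T : ℝ) (hT : 0 < T) (k H1 H2 H3 H4 H5 : ℝ → ℝ)
    (hk_lip : ∃ K : NNReal, LipschitzWith K k)
    (h1_lip : ∃ K : NNReal, LipschitzWith K H1)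
    (h2_lip : ∃ K : NNReal, LipschitzWith K H2)
    (h3_lip : ∃ K : NNReal, LipschitzWith K H3)
    (h4_lip : ∃ K : NNReal, LipschitzWith K H4) (h4_bdd : ∃ M : ℝ, ∀ y, |H4 y| ≤ M)
    (h5_lip : ∃ K : NNReal, LipschitzWith K H5) (h5_bdd : ∃ M : ℝ, ∀ y, |H5 y| ≤ M) :
    (∃ x : ℝ → ℝ, ContinuousOn x (Set.Icc 0 T) ∧ IntegralEq2 k H1 H2 H3 H4 H5 T x) ∧
    (∀ x y : ℝ → ℝ, ContinuousOn x (Set.Icc 0 T) → IntegralEq2 k H1 H2 H3 H4 H5 T x →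
      ContinuousOn y (Set.Icc 0 T) → IntegralEq2 k H1 H2 H3 H4 H5 T y →
      Set.EqOn x y (Set.Icc 0 T)) := by
  obtain ⟨_, hk⟩ := hk_lip
  obtain ⟨_, h1⟩ := h1_lip
  obtain ⟨_, h2⟩ := h2_lip
  obtain ⟨_, h3⟩ := h3_lip
  obtain ⟨_, h4⟩ := h4_lip
  obtain ⟨_, h5⟩ := h5_lip
  obtain ⟨_, hM4⟩ := h4_bdd
  obtain ⟨_, hM5⟩ := h5_bdd
  have hΦ := picardMap_volterraLipschitzOn hT.le hk h1 h2 h3 h4 h5 hM4 hM5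
  refine ⟨?_, fun x y hx hxΦ hy hyΦ =>
    eqOn_of_volterraLipschitzOn hT.le (fun _ _ => picardMap_congr) hΦ hx hy hxΦ hyΦ⟩
  obtain ⟨x, hx, hxΦ⟩ := exists_continuous_eqOn_of_volterraLipschitzOn hT.le
    (fun _ => continuous_picardMap hk.continuous h1.continuous h2.continuous h3.continuous
      h4.continuous h5.continuous) hΦ
  exact ⟨x, hx.continuousOn, hxΦ⟩
end

section
/- Fix T > 0. Let k, H₁, H₂, H₃, H₄ : ℝ → ℝ be bounded, Lipschitz continuous functions. Then there exists a constant d₄, depending only on T and on the supremum norms and Lipschitz constants of k, H₁, H₂, H₃, H₄, such that every continuous function x : [0,T] → ℝ satisfying x_t = H₁(∫₀ᵗ k(x_u) du) + ∫₀ᵗ H₂(∫ₛᵗ k(x_u) du) ds + ∫₀ᵗ H₃(x_s)·H₄(∫ₛᵗ k(x_u) du) ds for all t ∈ [0,T] is Lipschitz continuous with |x_t − x_s| ≤ d₄·|t − s| for all s, t ∈ [0,T]. -/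
open MeasureTheory Set

/-- The integral equation
`x_t = H₁(∫₀ᵗ k(x_u) du) + ∫₀ᵗ H₂(∫ₛᵗ k(x_u) du) ds + ∫₀ᵗ H₃(x_s)·H₄(∫ₛᵗ k(x_u) du) ds`. -/
def IntegralEq1 (k H1 H2 H3 H4 : ℝ → ℝ) (T : ℝ) (x : ℝ → ℝ) : Prop :=
  ∀ t ∈ Set.Icc (0 : ℝ) T,
    x t = H1 (∫ u in (0 : ℝ)..t, k (x u))
      + ∫ s in (0 : ℝ)..t, H2 (∫ u in s..t, k (x u))
      + ∫ s in (0 : ℝ)..t, H3 (x s) * H4 (∫ u in s..t, k (x u))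

/-!
Write `K(s, t) = ∫ₛᵗ k(x_u) du`, so that `|K(s, t)| ≤ ‖k‖∞ |t - s|` and
`K(u, t) - K(u, s) = K(s, t)`. Each term of the equation is `H₁(K(0, t))` or of the form
`∫₀ᵗ Φ(u, K(u, t)) du` (possibly times `t`) with `Φ` bounded and Lipschitz in its second argument.
Splitting `∫₀ᵗ = ∫₀ˢ + ∫ₛᵗ`, the increment of such a term between `s ≤ t` is an integral over
`[0, s]` of `Φ(u, K(u, t)) - Φ(u, K(u, s))`, which is `O(t - s)` pointwise, plus an integral of a
bounded function over `[s, t]`.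
-/

lemma abs_intervalIntegral_le_of_abs_le {f : ℝ → ℝ} {a b C : ℝ} (hab : a ≤ b)
    (h : ∀ x ∈ Ioc a b, |f x| ≤ C) : |∫ x in a..b, f x| ≤ C * (b - a) := by
  have := intervalIntegral.norm_integral_le_of_norm_le_const (f := f) (C := C)
    (by rwa [uIoc_of_le hab])
  rwa [abs_of_nonneg (sub_nonneg.2 hab)] at this

lemma LipschitzWith.abs_sub_le_s4 {K : NNReal} {f : ℝ → ℝ} (hf : LipschitzWith K f) (x y : ℝ) :
    |f x - f y| ≤ K * |x - y| := by
  simpa only [Real.dist_eq] using hf.dist_le_mul x y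

lemma continuousOn_intervalIntegral_left {g : ℝ → ℝ} {a b : ℝ} (hab : a ≤ b)
    (hg : ContinuousOn g (Icc a b)) : ContinuousOn (fun u => ∫ r in u..b, g r) (Icc a b) := by
  rw [← uIcc_of_le hab] at hg ⊢
  exact intervalIntegral.continuousOn_primitive_interval_left hg.integrableOn_uIcc

lemma abs_intervalIntegral_sub_intervalIntegral_le {g : ℝ → ℝ} {a s t Mg : ℝ} (has : a ≤ s)
    (hst : s ≤ t) (hg : IntervalIntegrable g volume a t) (hgM : ∀ r, |g r| ≤ Mg) :
    |(∫ r in a..t, g r) - ∫ r in a..s, g r| ≤ Mg * (t - s) := by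
  rw [intervalIntegral.integral_interval_sub_left hg
    (hg.mono_set (uIcc_subset_uIcc_left (mem_uIcc_of_le has hst)))]
  exact abs_intervalIntegral_le_of_abs_le hst fun r _ => hgM r

lemma abs_integral_comp_intervalIntegral_sub_le {g : ℝ → ℝ} {Φ : ℝ → ℝ → ℝ} {a s t Mg M L : ℝ}
    (has : a ≤ s) (hst : s ≤ t) (hg : IntervalIntegrable g volume a t)
    (hgM : ∀ r, |g r| ≤ Mg) (hΦM : ∀ u y, |Φ u y| ≤ M)
    (hΦL : ∀ u y y', |Φ u y - Φ u y'| ≤ L * |y - y'|)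
    (hΦt : IntervalIntegrable (fun u => Φ u (∫ r in u..t, g r)) volume a t)
    (hΦs : IntervalIntegrable (fun u => Φ u (∫ r in u..s, g r)) volume a s) :
    |(∫ u in a..t, Φ u (∫ r in u..t, g r)) - ∫ u in a..s, Φ u (∫ r in u..s, g r)|
      ≤ (M + L * Mg * (s - a)) * (t - s) := by
  have hL : 0 ≤ L := by simpa using (abs_nonneg _).trans (hΦL a 1 0)
  have hs_mem : s ∈ uIcc a t := mem_uIcc_of_le has hst
  have hΦt_as : IntervalIntegrable (fun u => Φ u (∫ r in u..t, g r)) volume a s :=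
    hΦt.mono_set (uIcc_subset_uIcc_left hs_mem)
  have hΦt_st : IntervalIntegrable (fun u => Φ u (∫ r in u..t, g r)) volume s t :=
    hΦt.mono_set (uIcc_subset_uIcc_right hs_mem)
  have hincr : ∀ u ∈ Ioc a s,
      |Φ u (∫ r in u..t, g r) - Φ u (∫ r in u..s, g r)| ≤ L * Mg * (t - s) := by
    intro u hu
    have hg_ut : IntervalIntegrable g volume u t :=
      hg.mono_set (uIcc_subset_uIcc_right (mem_uIcc_of_le hu.1.le (hu.2.trans hst)))
    calc _ ≤ L * |(∫ r in u..t, g r) - ∫ r in u..s, g r| := hΦL _ _ _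
      _ ≤ L * (Mg * (t - s)) := by
          gcongr; exact abs_intervalIntegral_sub_intervalIntegral_le hu.2 hst hg_ut hgM
      _ = L * Mg * (t - s) := by ring
  rw [← intervalIntegral.integral_add_adjacent_intervals hΦt_as hΦt_st, add_sub_right_comm,
    ← intervalIntegral.integral_sub hΦt_as hΦs]
  calc _ ≤ _ := abs_add_le _ _
    _ ≤ L * Mg * (t - s) * (s - a) + M * (t - s) :=
        add_le_add (abs_intervalIntegral_le_of_abs_le has hincr)
          (abs_intervalIntegral_le_of_abs_le hst fun u _ => hΦM _ _)
    _ = (M + L * Mg * (s - a)) * (t - s) := by ring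

lemma abs_mul_sub_mul_le_of_le {s t A B CA CB : ℝ} (hs : 0 ≤ s) (hst : s ≤ t)
    (hA : |A| ≤ CA) (hAB : |A - B| ≤ CB) : |t * A - s * B| ≤ (t - s) * CA + s * CB := by
  have hts : 0 ≤ t - s := sub_nonneg.2 hst
  calc |t * A - s * B| = |(t - s) * A + s * (A - B)| := by ring_nf
    _ ≤ (t - s) * |A| + s * |A - B| := by
        simpa only [abs_mul, abs_of_nonneg hts, abs_of_nonneg hs] using
          abs_add_le ((t - s) * A) (s * (A - B))
    _ ≤ (t - s) * CA + s * CB := by gcongr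

lemma abs_mul_integral_comp_intervalIntegral_sub_le {g : ℝ → ℝ} {Φ : ℝ → ℝ → ℝ}
    {s t T Mg M L : ℝ} (hs : 0 ≤ s) (hst : s ≤ t) (htT : t ≤ T)
    (hg : IntervalIntegrable g volume 0 t) (hgM : ∀ r, |g r| ≤ Mg) (hΦM : ∀ u y, |Φ u y| ≤ M)
    (hΦL : ∀ u y y', |Φ u y - Φ u y'| ≤ L * |y - y'|)
    (hΦt : IntervalIntegrable (fun u => Φ u (∫ r in u..t, g r)) volume 0 t)
    (hΦs : IntervalIntegrable (fun u => Φ u (∫ r in u..s, g r)) volume 0 s) :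
    |t * (∫ u in (0 : ℝ)..t, Φ u (∫ r in u..t, g r))
        - s * ∫ u in (0 : ℝ)..s, Φ u (∫ r in u..s, g r)|
      ≤ (M * T + T * (M + L * Mg * T)) * (t - s) := by
  have hL : 0 ≤ L := by simpa using (abs_nonneg _).trans (hΦL 0 1 0)
  have hMg : 0 ≤ Mg := (abs_nonneg _).trans (hgM 0)
  have hM : 0 ≤ M := (abs_nonneg _).trans (hΦM 0 0)
  have hsT : s ≤ T := hst.trans htT
  have hT : 0 ≤ T := hs.trans hsT
  have hbound : |∫ u in (0 : ℝ)..t, Φ u (∫ r in u..t, g r)| ≤ M * T :=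
    calc _ ≤ M * (t - 0) := abs_intervalIntegral_le_of_abs_le (hs.trans hst) fun u _ => hΦM _ _
      _ ≤ M * T := by rw [sub_zero]; gcongr
  calc _ ≤ (t - s) * (M * T) + s * ((M + L * Mg * (s - 0)) * (t - s)) :=
        abs_mul_sub_mul_le_of_le hs hst hbound
          (abs_integral_comp_intervalIntegral_sub_le hs hst hg hgM hΦM hΦL hΦt hΦs)
    _ = (M * T + s * (M + L * Mg * s)) * (t - s) := by ring
    _ ≤ (M * T + T * (M + L * Mg * T)) * (t - s) := by
        have := sub_nonneg.2 hst
        gcongr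

/- The last integral in `IntegralEq1` lies inside the body of the middle one and does not depend
on its variable, so it enters the equation multiplied by `t`. -/
lemma IntegralEq1.eq_add_mul {k H1 H2 H3 H4 x : ℝ → ℝ} {T τ : ℝ}
    (hEq : IntegralEq1 k H1 H2 H3 H4 T x) (hτ : τ ∈ Icc 0 T)
    (hI2 : IntervalIntegrable (fun u => H2 (∫ r in u..τ, k (x r))) volume 0 τ) :
    x τ = H1 (∫ u in (0 : ℝ)..τ, k (x u)) + (∫ u in (0 : ℝ)..τ, H2 (∫ r in u..τ, k (x r)))
      + τ * ∫ u in (0 : ℝ)..τ, H3 (x u) * H4 (∫ r in u..τ, k (x r)) := by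
  rw [hEq τ hτ, intervalIntegral.integral_add hI2 intervalIntegrable_const,
    intervalIntegral.integral_const, sub_zero, smul_eq_mul, add_assoc]

lemma IntegralEq1.abs_sub_le_of_le {T : ℝ} {Lk L1 L2 L3 L4 : NNReal} {Mk M2 M3 M4 : ℝ}
    {k H1 H2 H3 H4 x : ℝ → ℝ}
    (hk : LipschitzWith Lk k) (h1 : LipschitzWith L1 H1) (h2 : LipschitzWith L2 H2)
    (h3 : LipschitzWith L3 H3) (h4 : LipschitzWith L4 H4)
    (hMk : ∀ y, |k y| ≤ Mk) (hM2 : ∀ y, |H2 y| ≤ M2) (hM3 : ∀ y, |H3 y| ≤ M3)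
    (hM4 : ∀ y, |H4 y| ≤ M4) (hx : ContinuousOn x (Icc 0 T))
    (hEq : IntegralEq1 k H1 H2 H3 H4 T x) {s t : ℝ} (hs : s ∈ Icc 0 T) (ht : t ∈ Icc 0 T)
    (hst : s ≤ t) :
    |x t - x s| ≤ (L1 * Mk + (M2 + L2 * Mk * T) + (M3 * M4 * T + T * (M3 * M4 + M3 * L4 * Mk * T)))
      * (t - s) := by
  set K : ℝ → ℝ → ℝ := fun a b => ∫ r in a..b, k (x r)
  set G : ℝ → ℝ := fun τ => ∫ u in (0 : ℝ)..τ, H3 (x u) * H4 (K u τ)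
  have hMk0 : 0 ≤ Mk := (abs_nonneg _).trans (hMk 0)
  have hM30 : 0 ≤ M3 := (abs_nonneg _).trans (hM3 0)
  have hkx : ContinuousOn (fun u => k (x u)) (Icc 0 T) := hk.continuous.comp_continuousOn hx
  have hK_cont : ∀ τ ∈ Icc 0 T, ContinuousOn (fun u => K u τ) (Icc 0 τ) := fun τ hτ =>
    continuousOn_intervalIntegral_left hτ.1 (hkx.mono (Icc_subset_Icc_right hτ.2))
  have hI2 : ∀ τ ∈ Icc 0 T, IntervalIntegrable (fun u => H2 (K u τ)) volume 0 τ := fun τ hτ =>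
    (h2.continuous.comp_continuousOn (hK_cont τ hτ)).intervalIntegrable_of_Icc hτ.1
  have hI3 : ∀ τ ∈ Icc 0 T, IntervalIntegrable (fun u => H3 (x u) * H4 (K u τ)) volume 0 τ :=
    fun τ hτ => ((h3.continuous.comp_continuousOn (hx.mono (Icc_subset_Icc_right hτ.2))).mul
      (h4.continuous.comp_continuousOn (hK_cont τ hτ))).intervalIntegrable_of_Icc hτ.1
  have hrepr : ∀ τ ∈ Icc 0 T,
      x τ = H1 (K 0 τ) + (∫ u in (0 : ℝ)..τ, H2 (K u τ)) + τ * G τ := fun τ hτ =>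
    hEq.eq_add_mul hτ (hI2 τ hτ)
  have hkx_int : IntervalIntegrable (fun u => k (x u)) volume 0 t :=
    (hkx.mono (Icc_subset_Icc_right ht.2)).intervalIntegrable_of_Icc ht.1
  have hB1 : |H1 (K 0 t) - H1 (K 0 s)| ≤ L1 * Mk * (t - s) := by
    calc _ ≤ L1 * |K 0 t - K 0 s| := h1.abs_sub_le_s4 _ _
      _ ≤ L1 * (Mk * (t - s)) := by
          gcongr
          exact abs_intervalIntegral_sub_intervalIntegral_le hs.1 hst hkx_int fun r => hMk (x r)
      _ = L1 * Mk * (t - s) := by ring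
  have hB2 : |(∫ u in (0 : ℝ)..t, H2 (K u t)) - ∫ u in (0 : ℝ)..s, H2 (K u s)|
      ≤ (M2 + L2 * Mk * (s - 0)) * (t - s) :=
    abs_integral_comp_intervalIntegral_sub_le hs.1 hst hkx_int (fun r => hMk (x r))
      (fun _ y => hM2 y) (fun _ => h2.abs_sub_le_s4) (hI2 t ht) (hI2 s hs)
  have hΦM : ∀ u y, |H3 (x u) * H4 y| ≤ M3 * M4 := fun u y => by
    rw [abs_mul]; exact mul_le_mul (hM3 _) (hM4 _) (abs_nonneg _) hM30
  have hΦL : ∀ u y y', |H3 (x u) * H4 y - H3 (x u) * H4 y'| ≤ M3 * L4 * |y - y'| :=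
    fun u y y' => by
      rw [← mul_sub, abs_mul, mul_assoc]
      exact mul_le_mul (hM3 _) (h4.abs_sub_le_s4 y y') (abs_nonneg _) hM30
  have hB3 : |t * G t - s * G s| ≤ (M3 * M4 * T + T * (M3 * M4 + M3 * L4 * Mk * T)) * (t - s) :=
    abs_mul_integral_comp_intervalIntegral_sub_le hs.1 hst ht.2 hkx_int (fun r => hMk (x r))
      hΦM hΦL (hI3 t ht) (hI3 s hs)
  rw [hrepr t ht, hrepr s hs]
  calc _ = |(H1 (K 0 t) - H1 (K 0 s))
        + ((∫ u in (0 : ℝ)..t, H2 (K u t)) - ∫ u in (0 : ℝ)..s, H2 (K u s))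
        + (t * G t - s * G s)| := by ring_nf
    _ ≤ _ := abs_add_three _ _ _
    _ ≤ L1 * Mk * (t - s) + (M2 + L2 * Mk * (s - 0)) * (t - s)
        + (M3 * M4 * T + T * (M3 * M4 + M3 * L4 * Mk * T)) * (t - s) := by
        gcongr
    _ = (L1 * Mk + (M2 + L2 * Mk * s) + (M3 * M4 * T + T * (M3 * M4 + M3 * L4 * Mk * T)))
        * (t - s) := by ring
    _ ≤ _ := by
        have := sub_nonneg.2 hst
        have := mul_nonneg L2.coe_nonneg hMk0
        gcongr
        exact hs.2

theorem stmt4_general (T : ℝ)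
    (Lk L1 L2 L3 L4 : NNReal) (Mk M1 M2 M3 M4 : ℝ) :
    ∃ d4 : ℝ, ∀ k H1 H2 H3 H4 : ℝ → ℝ,
      LipschitzWith Lk k → LipschitzWith L1 H1 → LipschitzWith L2 H2 →
      LipschitzWith L3 H3 → LipschitzWith L4 H4 →
      (∀ y, |k y| ≤ Mk) → (∀ y, |H1 y| ≤ M1) → (∀ y, |H2 y| ≤ M2) →
      (∀ y, |H3 y| ≤ M3) → (∀ y, |H4 y| ≤ M4) →
      ∀ x : ℝ → ℝ, ContinuousOn x (Set.Icc 0 T) →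
        IntegralEq1 k H1 H2 H3 H4 T x →
        ∀ s ∈ Set.Icc (0 : ℝ) T, ∀ t ∈ Set.Icc (0 : ℝ) T,
          |x t - x s| ≤ d4 * |t - s| := by
  refine ⟨L1 * Mk + (M2 + L2 * Mk * T) + (M3 * M4 * T + T * (M3 * M4 + M3 * L4 * Mk * T)),
    fun k H1 H2 H3 H4 hk h1 h2 h3 h4 hMk _ hM2 hM3 hM4 x hx hEq s hs t ht => ?_⟩
  rcases le_total s t with hst | hts
  · rw [abs_of_nonneg (sub_nonneg.2 hst)]
    exact hEq.abs_sub_le_of_le hk h1 h2 h3 h4 hMk hM2 hM3 hM4 hx hs ht hst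
  · rw [abs_sub_comm, abs_sub_comm t, abs_of_nonneg (sub_nonneg.2 hts)]
    exact hEq.abs_sub_le_of_le hk h1 h2 h3 h4 hMk hM2 hM3 hM4 hx ht hs hts

/-- Uniform Lipschitz (equicontinuity) bound: `d₄` depends only on `T` and on the
sup norms and Lipschitz constants of `k, H₁, H₂, H₃, H₄`. -/
theorem stmt4 (T : ℝ) (hT : 0 < T)
    (Lk L1 L2 L3 L4 : NNReal) (Mk M1 M2 M3 M4 : ℝ) :
    ∃ d4 : ℝ, ∀ k H1 H2 H3 H4 : ℝ → ℝ,
      LipschitzWith Lk k → LipschitzWith L1 H1 → LipschitzWith L2 H2 →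
      LipschitzWith L3 H3 → LipschitzWith L4 H4 →
      (∀ y, |k y| ≤ Mk) → (∀ y, |H1 y| ≤ M1) → (∀ y, |H2 y| ≤ M2) →
      (∀ y, |H3 y| ≤ M3) → (∀ y, |H4 y| ≤ M4) →
      ∀ x : ℝ → ℝ, ContinuousOn x (Set.Icc 0 T) →
        IntegralEq1 k H1 H2 H3 H4 T x →
        ∀ s ∈ Set.Icc (0 : ℝ) T, ∀ t ∈ Set.Icc (0 : ℝ) T,
          |x t - x s| ≤ d4 * |t - s| :=
  stmt4_general T Lk L1 L2 L3 L4 Mk M1 M2 M3 M4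
end
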